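/- arXiv:2007.04958 — 6 statements merged into one kernel-verified Lean document; each statement's English description precedes it below -/
import Mathlib

section
/- Let x₀ = 1 and β ∈ ℝ. The equation 2√s + β e^{-√s} = 0 has a solution s on the negative real axis (−∞, 0] if and only if β = (4k+1)π for some k ∈ ℕ (with s = −(4k+1)²π²/4) or β = −(4k+3)π for some k ∈ ℕ (with s = −(4k+3)²π²/4). -/
open Real Complex


lemma key (β γ : ℝ) :
    2 * (Complex.I * γ) + (β:ℂ) * Complex.exp (-(Complex.I * γ)) = 0 ↔
    (β * Real.cos γ = 0 ∧ 2*γ = β * Real.sin γ) := by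
  have h : -(Complex.I * (γ:ℂ)) = (↑(-γ):ℂ) * Complex.I := by push_cast; ring
  rw [h, Complex.exp_mul_I, Complex.ext_iff]
  push_cast
  simp [Complex.add_re, Complex.add_im, Complex.mul_re, Complex.mul_im,
    Complex.cos_ofReal_re, Complex.sin_ofReal_re, mul_eq_zero]
  intro _
  constructor <;> intro <;> linarith

lemma sqrt1 (k : ℕ) :
    Real.sqrt (-(-((4 * (k:ℝ) + 1) ^ 2 * π ^ 2 / 4))) = (4 * k + 1) * π / 2 := by
  rw [neg_neg]
  have h : (4 * (k:ℝ) + 1) ^ 2 * π ^ 2 / 4 = ((4 * k + 1) * π / 2) ^ 2 := by ring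
  rw [h, Real.sqrt_sq (by positivity)]

lemma sqrt2 (k : ℕ) :
    Real.sqrt (-(-((4 * (k:ℝ) + 3) ^ 2 * π ^ 2 / 4))) = (4 * k + 3) * π / 2 := by
  rw [neg_neg]
  have h : (4 * (k:ℝ) + 3) ^ 2 * π ^ 2 / 4 = ((4 * k + 3) * π / 2) ^ 2 := by ring
  rw [h, Real.sqrt_sq (by positivity)]

lemma cos1 (k : ℕ) : Real.cos ((4 * (k:ℝ) + 1) * π / 2) = 0 := by
  have h : (4 * (k:ℝ) + 1) * π / 2 = π / 2 + (k:ℤ) * (2 * π) := by push_cast; ring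
  rw [h, Real.cos_add_int_mul_two_pi, Real.cos_pi_div_two]

lemma sin1 (k : ℕ) : Real.sin ((4 * (k:ℝ) + 1) * π / 2) = 1 := by
  have h : (4 * (k:ℝ) + 1) * π / 2 = π / 2 + (k:ℤ) * (2 * π) := by push_cast; ring
  rw [h, Real.sin_add_int_mul_two_pi, Real.sin_pi_div_two]

lemma cos2 (k : ℕ) : Real.cos ((4 * (k:ℝ) + 3) * π / 2) = 0 := by
  have h : (4 * (k:ℝ) + 3) * π / 2 = -(π / 2) + (((k:ℤ)+1 : ℤ) : ℝ) * (2 * π) := by push_cast; ring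
  rw [h, Real.cos_add_int_mul_two_pi, Real.cos_neg, Real.cos_pi_div_two]

lemma sin2 (k : ℕ) : Real.sin ((4 * (k:ℝ) + 3) * π / 2) = -1 := by
  have h : (4 * (k:ℝ) + 3) * π / 2 = -(π / 2) + (((k:ℤ)+1 : ℤ) : ℝ) * (2 * π) := by push_cast; ring
  rw [h, Real.sin_add_int_mul_two_pi, Real.sin_neg, Real.sin_pi_div_two]

lemma case1 (k : ℕ) :
    2 * (Complex.I * Real.sqrt (-(-((4 * (k:ℝ) + 1) ^ 2 * π ^ 2 / 4)))) +
      ((((4 * (k:ℝ) + 1) * π) : ℝ) : ℂ) * Complex.exp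
        (-(Complex.I * Real.sqrt (-(-((4 * (k:ℝ) + 1) ^ 2 * π ^ 2 / 4))))) = 0 := by
  rw [sqrt1, key]
  rw [cos1, sin1]
  constructor <;> ring

lemma case2 (k : ℕ) :
    2 * (Complex.I * Real.sqrt (-(-((4 * (k:ℝ) + 3) ^ 2 * π ^ 2 / 4)))) +
      (((-((4 * (k:ℝ) + 3) * π)) : ℝ) : ℂ) * Complex.exp
        (-(Complex.I * Real.sqrt (-(-((4 * (k:ℝ) + 3) ^ 2 * π ^ 2 / 4))))) = 0 := by
  rw [sqrt2, key]
  rw [cos2, sin2]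
  constructor <;> ring

/-- For `x₀ = 1` and `β ≠ 0`, the equation `2√s + β e^{-√s} = 0`
(with `√s = i√|s|` for `s ≤ 0`) has a solution `s ∈ (-∞, 0]` if and only if
`β = (4k+1)π` for some `k ∈ ℕ` (with `s = -(4k+1)²π²/4`) or `β = -(4k+3)π`
for some `k ∈ ℕ` (with `s = -(4k+3)²π²/4`). -/
theorem stmt3 (β : ℝ) (hβ : β ≠ 0) :
    (∃ s : ℝ, s ≤ 0 ∧
        2 * (Complex.I * Real.sqrt (-s)) +
          (β : ℂ) * Complex.exp (-(Complex.I * Real.sqrt (-s))) = 0) ↔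
    ((∃ k : ℕ, β = (4 * k + 1) * π ∧
        (2 * (Complex.I * Real.sqrt (-(-((4 * k + 1) ^ 2 * π ^ 2 / 4)))) +
          (β : ℂ) * Complex.exp
            (-(Complex.I * Real.sqrt (-(-((4 * k + 1) ^ 2 * π ^ 2 / 4))))) = 0)) ∨
     (∃ k : ℕ, β = -((4 * k + 3) * π) ∧
        (2 * (Complex.I * Real.sqrt (-(-((4 * k + 3) ^ 2 * π ^ 2 / 4)))) +
          (β : ℂ) * Complex.exp
            (-(Complex.I * Real.sqrt (-(-((4 * k + 3) ^ 2 * π ^ 2 / 4))))) = 0))) := by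
  constructor
  · rintro ⟨s, hs, heq⟩
    set γ := Real.sqrt (-s) with hγdef
    have hγ0 : 0 ≤ γ := Real.sqrt_nonneg _
    rw [key] at heq
    obtain ⟨hcos, hsin⟩ := heq
    have hc : Real.cos γ = 0 := by
      rcases mul_eq_zero.1 hcos with h | h
      · exact absurd h hβ
      · exact h
    obtain ⟨n, hn⟩ := Real.cos_eq_zero_iff.1 hc
    have hn0 : 0 ≤ n := by
      by_contra hneg
      push_neg at hneg
      have hn1 : n ≤ -1 := by omega
      have hn1' : (n:ℝ) ≤ -1 := by exact_mod_cast hn1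
      have h1 : (2 * (n:ℝ) + 1) ≤ -1 := by linarith
      have : γ < 0 := by
        rw [hn]
        have hπ : 0 < π := Real.pi_pos
        nlinarith
      linarith
    rcases Int.even_or_odd n with ⟨m, hm⟩ | ⟨m, hm⟩
    · -- n = 2m, γ = (4m+1)π/2
      have hm0 : 0 ≤ m := by omega
      set k := m.toNat with hk
      have hmk : (m:ℝ) = (k:ℝ) := by exact_mod_cast (Int.toNat_of_nonneg hm0).symm
      have hγ : γ = (4 * (k:ℝ) + 1) * π / 2 := by
        rw [hn, hm]; push_cast [← hmk]; ring
      have hsinγ : Real.sin γ = 1 := by rw [hγ]; exact sin1 k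
      have hβeq : β = (4 * (k:ℝ) + 1) * π := by
        rw [hsinγ, mul_one] at hsin
        rw [← hsin, hγ]; ring
      left
      exact ⟨k, hβeq, by rw [hβeq]; exact case1 k⟩
    · -- n = 2m+1, γ = (4m+3)π/2
      have hm0 : 0 ≤ m := by omega
      set k := m.toNat with hk
      have hmk : (m:ℝ) = (k:ℝ) := by exact_mod_cast (Int.toNat_of_nonneg hm0).symm
      have hγ : γ = (4 * (k:ℝ) + 3) * π / 2 := by
        rw [hn, hm]; push_cast [← hmk]; ring
      have hsinγ : Real.sin γ = -1 := by rw [hγ]; exact sin2 k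
      have hβeq : β = -((4 * (k:ℝ) + 3) * π) := by
        rw [hsinγ] at hsin
        rw [hγ] at hsin
        linarith
      right
      exact ⟨k, hβeq, by rw [hβeq]; exact case2 k⟩
  · rintro (⟨k, hβeq, heq⟩ | ⟨k, hβeq, heq⟩)
    · exact ⟨-((4 * k + 1) ^ 2 * π ^ 2 / 4), neg_nonpos.2 (by positivity), heq⟩
    · exact ⟨-((4 * k + 3) ^ 2 * π ^ 2 / 4), neg_nonpos.2 (by positivity), heq⟩
end

section
/- Fix m* > 1 and for m ≥ m* set γ₀(m) = π − arctan(m). Then γ₀ is strictly decreasing in m, γ₀(m) ∈ (π/2, 3π/4) for m > 1, and the function Φ(m) = 2 γ₀(m) e^{γ₀(m)/m} / sin(γ₀(m)) is strictly decreasing on (1, ∞) with lim_{m→∞} Φ(m) = π. -/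
open Real Filter

lemma gamma_mem {m : ℝ} (hm : 1 < m) : π - arctan m ∈ Set.Ioo (π / 2) (3 * π / 4) := by
  have h1 : arctan m < π / 2 := Real.arctan_lt_pi_div_two m
  have h2 : π / 4 < arctan m := by
    have := Real.arctan_strictMono hm
    simpa [Real.arctan_one] using this
  constructor <;> [linarith; linarith]

lemma hasDerivAt_Phi {m : ℝ} (hm : 1 < m) :
    ∃ d < 0, HasDerivAt (fun m : ℝ =>
        2 * (π - Real.arctan m) * Real.exp ((π - Real.arctan m) / m) /
          Real.sin (π - Real.arctan m)) d m := by
  have hm0 : (0:ℝ) < m := by linarith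
  set γ := π - arctan m with hγdef
  obtain ⟨hγl, hγu⟩ := gamma_mem hm
  have hπ : (0:ℝ) < π := Real.pi_pos
  have hγpos : 0 < γ := by linarith
  have hγltπ : γ < π := by linarith
  have hsin : 0 < Real.sin γ := Real.sin_pos_of_pos_of_lt_pi hγpos hγltπ
  have hcos : Real.cos γ < 0 := Real.cos_neg_of_pi_div_two_lt_of_lt hγl (by linarith)
  set g' : ℝ := -(1 / (1 + m ^ 2)) with hg'def
  have hg'neg : g' < 0 := by
    have : (0:ℝ) < 1 + m ^ 2 := by positivity
    simp only [hg'def, neg_neg, neg_lt_zero]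
    positivity
  have hγ' : HasDerivAt (fun x : ℝ => π - arctan x) g' m := by
    simpa [hg'def] using (Real.hasDerivAt_arctan m).const_sub π
  set u' : ℝ := (g' * m - γ * 1) / m ^ 2 with hu'def
  have hu' : HasDerivAt (fun x : ℝ => (π - arctan x) / x) u' m :=
    hγ'.div (hasDerivAt_id m) (ne_of_gt hm0)
  have hu'neg : u' < 0 := by
    have hnum : g' * m - γ * 1 < 0 := by nlinarith
    have : (0:ℝ) < m ^ 2 := by positivity
    exact div_neg_of_neg_of_pos hnum this
  have he : HasDerivAt (fun x : ℝ => Real.exp ((π - arctan x) / x))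
      (Real.exp (γ / m) * u') m := hu'.exp
  have hepos : 0 < Real.exp (γ / m) := Real.exp_pos _
  have hN : HasDerivAt (fun x : ℝ => 2 * (π - arctan x) * Real.exp ((π - arctan x) / x))
      (2 * g' * Real.exp (γ / m) + 2 * γ * (Real.exp (γ / m) * u')) m :=
    (hγ'.const_mul 2).mul he
  have hD : HasDerivAt (fun x : ℝ => Real.sin (π - arctan x)) (Real.cos γ * g') m := hγ'.sin
  refine ⟨_, ?_, hN.div hD (ne_of_gt hsin)⟩
  have hden : 0 < Real.sin γ ^ 2 := by positivity
  apply div_neg_of_neg_of_pos _ hden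
  have t1 : 2 * g' * Real.exp (γ / m) * Real.sin γ < 0 := by
    nlinarith [mul_neg_of_neg_of_pos hg'neg (mul_pos hepos hsin)]
  have t2 : 2 * γ * (Real.exp (γ / m) * u') * Real.sin γ < 0 := by
    nlinarith [mul_neg_of_neg_of_pos (mul_neg_of_pos_of_neg hγpos hu'neg) (mul_pos hepos hsin)]
  have t3 : 2 * γ * Real.exp (γ / m) * (Real.cos γ * g') > 0 := by
    have : 0 < Real.cos γ * g' := mul_pos_of_neg_of_neg hcos hg'neg
    positivity
  nlinarith

/-- With `γ₀(m) = π - arctan m`, the function `γ₀` is strictly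
decreasing, `γ₀(m) ∈ (π/2, 3π/4)` for `m > 1`, and
`Φ(m) = 2 γ₀(m) e^{γ₀(m)/m} / sin(γ₀(m))` is strictly decreasing on `(1, ∞)`
with `Φ(m) → π` as `m → ∞`. -/
theorem stmt5 :
    StrictAnti (fun m : ℝ => π - Real.arctan m) ∧
    (∀ m : ℝ, 1 < m → π - Real.arctan m ∈ Set.Ioo (π / 2) (3 * π / 4)) ∧
    StrictAntiOn
      (fun m : ℝ =>
        2 * (π - Real.arctan m) * Real.exp ((π - Real.arctan m) / m) /
          Real.sin (π - Real.arctan m)) (Set.Ioi 1) ∧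
    Tendsto
      (fun m : ℝ =>
        2 * (π - Real.arctan m) * Real.exp ((π - Real.arctan m) / m) /
          Real.sin (π - Real.arctan m)) atTop (nhds π) := by
  refine ⟨?_, fun m hm => gamma_mem hm, ?_, ?_⟩
  · intro a b hab
    simp only
    have := Real.arctan_strictMono hab
    linarith
  · apply strictAntiOn_of_deriv_neg (convex_Ioi 1)
    · intro x hx
      obtain ⟨d, _, hd⟩ := hasDerivAt_Phi hx
      exact hd.continuousAt.continuousWithinAt
    · intro x hx
      rw [interior_Ioi] at hx
      obtain ⟨d, hdneg, hd⟩ := hasDerivAt_Phi hx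
      rwa [hd.deriv]
  · have hγ : Tendsto (fun m : ℝ => π - arctan m) atTop (nhds (π / 2)) := by
      have := Real.tendsto_arctan_atTop.mono_right nhdsWithin_le_nhds
      have h := tendsto_const_nhds (x := π) (f := atTop (α := ℝ)) |>.sub this
      simpa using h.congr (fun x => rfl) |>.mono_right (by
        have : π - π / 2 = π / 2 := by ring
        rw [this])
    have hquot : Tendsto (fun m : ℝ => (π - arctan m) / m) atTop (nhds 0) :=
      hγ.div_atTop tendsto_id
    have hexp : Tendsto (fun m : ℝ => Real.exp ((π - arctan m) / m)) atTop (nhds 1) := by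
      have := (Real.continuous_exp.tendsto 0).comp hquot
      simpa [Function.comp_def] using this
    have hsin : Tendsto (fun m : ℝ => Real.sin (π - arctan m)) atTop (nhds 1) := by
      have := (Real.continuous_sin.tendsto (π / 2)).comp hγ
      simp only [Function.comp, Real.sin_pi_div_two] at this
      exact this
    have hnum : Tendsto (fun m : ℝ => 2 * (π - arctan m) * Real.exp ((π - arctan m) / m))
        atTop (nhds π) := by
      have h2γ : Tendsto (fun m : ℝ => 2 * (π - arctan m)) atTop (nhds π) := by
        have := hγ.const_mul 2
        have h2 : (2:ℝ) * (π / 2) = π := by ring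
        rwa [h2] at this
      have := h2γ.mul hexp
      simpa using this
    have := hnum.div hsin one_ne_zero
    simpa [Pi.div_def] using this
end

section
/- Fix x₀ > 0 and let G_{L,x₀}(s) = sinh(√s(L − x₀))/(2√s cosh(√s L)) for L > x₀ and G_{x₀}(s) = e^{−√s x₀}/(2√s). Then G_{L,x₀}(s) → G_{x₀}(s) as L → ∞, uniformly on compact subsets of ℂ \ (−∞, 0], and also uniformly for s ∈ i·(ℝ \ (−ε, ε)) for every ε > 0. -/
open Complex Filter

private lemma sqrt_sq' (s : ℂ) (hs : s ≠ 0) : (s ^ ((1 : ℂ) / 2)) ^ 2 = s := by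
  have h2 : ((1 : ℂ) / 2) = ((2 : ℕ) : ℂ)⁻¹ := by norm_num
  rw [h2]
  exact Complex.cpow_nat_inv_pow s (by norm_num)

private lemma re_sqrt_nonneg (s : ℂ) : 0 ≤ (s ^ ((1 : ℂ) / 2)).re := by
  by_cases hs : s = 0
  · simp [hs, Complex.zero_cpow (by norm_num : ((1:ℂ)/2) ≠ 0)]
  · rw [Complex.cpow_def_of_ne_zero hs, Complex.exp_re]
    have him : (Complex.log s * ((1 : ℂ) / 2)).im = s.arg / 2 := by
      simp [Complex.mul_im, Complex.log_re, Complex.log_im]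
      ring
    rw [him]
    apply mul_nonneg (Real.exp_nonneg _)
    apply Real.cos_nonneg_of_mem_Icc
    constructor
    · have := Complex.neg_pi_lt_arg s
      linarith
    · have := Complex.arg_le_pi s
      linarith

private lemma re_sqrt_eq (s : ℂ) (hs : s ≠ 0) :
    (s ^ ((1 : ℂ) / 2)).re = Real.sqrt ((‖s‖ + s.re) / 2) := by
  set w := s ^ ((1 : ℂ) / 2) with hw
  have hsq : w ^ 2 = s := sqrt_sq' s hs
  have hre : s.re = w.re ^ 2 - w.im ^ 2 := by
    rw [← hsq]; simp [Complex.mul_re, sq]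
  have habs : ‖s‖ = w.re ^ 2 + w.im ^ 2 := by
    rw [← hsq, show w ^ 2 = w * w by ring, norm_mul,
      show ‖w‖ * ‖w‖ = ‖w‖ ^ 2 by ring,
      Complex.sq_norm, Complex.normSq_apply, sq, sq]
  have key : (‖s‖ + s.re) / 2 = w.re ^ 2 := by
    rw [hre, habs]; ring
  rw [key, Real.sqrt_sq (re_sqrt_nonneg s)]

private lemma abs_sqrt (s : ℂ) (hs : s ≠ 0) :
    ‖s ^ ((1 : ℂ) / 2)‖ = Real.sqrt (‖s‖) := by
  rw [norm_cpow_of_ne_zero hs]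
  simp [Real.sqrt_eq_rpow]

/-- Key uniform convergence lemma. -/
private lemma keyLemma (x₀ c m : ℝ) (hx₀ : 0 < x₀) (hc : 0 < c) (hm : 0 < m) (S : Set ℂ)
    (hS : ∀ s ∈ S, c ≤ (s ^ ((1 : ℂ) / 2)).re ∧ m ≤ ‖s ^ ((1 : ℂ) / 2)‖) :
    TendstoUniformlyOn
      (fun (L : ℝ) (s : ℂ) =>
        Complex.sinh (s ^ ((1 : ℂ) / 2) * ((L : ℂ) - (x₀ : ℂ))) /
          (2 * s ^ ((1 : ℂ) / 2) * Complex.cosh (s ^ ((1 : ℂ) / 2) * (L : ℂ))))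
      (fun s : ℂ => Complex.exp (-(s ^ ((1 : ℂ) / 2)) * (x₀ : ℂ)) /
        (2 * s ^ ((1 : ℂ) / 2)))
      atTop S := by
  rw [Metric.tendstoUniformlyOn_iff]
  intro δ hδ
  have hB : Tendsto (fun L : ℝ => (2 / m) * Real.exp (c * (x₀ - 2 * L))) atTop (nhds 0) := by
    rw [show (0:ℝ) = (2/m) * 0 by ring]
    apply Tendsto.const_mul
    apply Real.tendsto_exp_atBot.comp
    have h1 : Tendsto (fun L : ℝ => (2*c)*L) atTop atTop :=
      Tendsto.const_mul_atTop (by positivity) tendsto_id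
    have h2 : Tendsto (fun L : ℝ => c*x₀ + -((2*c)*L)) atTop atBot :=
      tendsto_atBot_add_const_left atTop (c*x₀) (tendsto_neg_atTop_atBot.comp h1)
    exact h2.congr (fun L => by ring)
  filter_upwards [hB.eventually (gt_mem_nhds hδ), eventually_ge_atTop (x₀ / 2),
    eventually_ge_atTop (Real.log 2 / (2*c)), eventually_ge_atTop 0] with L hBL hL1 hL2 hL0
  intro s hs
  obtain ⟨hcre, hmabs⟩ := hS s hs
  set w := s ^ ((1:ℂ)/2) with hwdef
  have hw0 : w ≠ 0 := by
    intro h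
    rw [h] at hmabs; simp at hmabs; linarith
  set r := w.re with hrdef
  have hr0 : 0 < r := lt_of_lt_of_le hc hcre
  have hwL_re : (w * (L:ℂ)).re = r * L := by simp [Complex.mul_re, hrdef]
  have hwx_re : (w * (x₀:ℂ)).re = r * x₀ := by simp [Complex.mul_re, hrdef]
  -- exp(-rL) ≤ exp(rL)/2
  have hexp2 : Real.exp (-(r*L)) ≤ Real.exp (r*L) / 2 := by
    have h1 : Real.exp (-(r*L)) = Real.exp (r*L) * Real.exp (-(2*(r*L))) := by
      rw [← Real.exp_add]; norm_num; ring_nf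
    have h3 : Real.exp (-(2*(r*L))) ≤ 1/2 := by
      rw [show (1:ℝ)/2 = Real.exp (-(Real.log 2)) by
        rw [Real.exp_neg, Real.exp_log (by norm_num : (0:ℝ) < 2)]; norm_num]
      apply Real.exp_le_exp.mpr
      have hcl : Real.log 2 ≤ (2*c)*L := by
        rw [div_le_iff₀ (by positivity)] at hL2
        linarith [hL2]
      have hrl : (2*c)*L ≤ 2*(r*L) := by nlinarith
      linarith
    rw [h1]
    nlinarith [Real.exp_pos (r*L)]
  -- lower bound for |cosh(wL)|
  have hcoshdef : Complex.cosh (w*(L:ℂ)) = (Complex.exp (w*(L:ℂ)) + Complex.exp (-(w*(L:ℂ))))/2 := rfl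
  have htri : ‖Complex.exp (w*(L:ℂ))‖ ≤
      ‖Complex.exp (w*(L:ℂ)) + Complex.exp (-(w*(L:ℂ)))‖ +
        ‖Complex.exp (-(w*(L:ℂ)))‖ := by
    have := norm_add_le (Complex.exp (w*(L:ℂ)) + Complex.exp (-(w*(L:ℂ))))
      (-(Complex.exp (-(w*(L:ℂ)))))
    simpa using this
  have habs_exp1 : ‖Complex.exp (w*(L:ℂ))‖ = Real.exp (r*L) := by
    rw [Complex.norm_exp, hwL_re]
  have habs_exp2 : ‖Complex.exp (-(w*(L:ℂ)))‖ = Real.exp (-(r*L)) := by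
    rw [Complex.norm_exp, Complex.neg_re, hwL_re]
  have hcosh_lb : Real.exp (r*L) / 4 ≤ ‖Complex.cosh (w*(L:ℂ))‖ := by
    rw [hcoshdef]
    simp only [norm_div, Complex.norm_two]
    rw [habs_exp1, habs_exp2] at htri
    linarith
  have hcosh_ne : Complex.cosh (w*(L:ℂ)) ≠ 0 := by
    intro h
    rw [h] at hcosh_lb
    simp at hcosh_lb
    nlinarith [Real.exp_pos (r*L)]
  -- numerator identity
  have hnum : Complex.exp (-(w*(x₀:ℂ))) * Complex.cosh (w*(L:ℂ))
      - Complex.sinh (w * ((L:ℂ) - (x₀:ℂ)))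
      = Complex.cosh (w*(x₀:ℂ)) * Complex.exp (-(w*(L:ℂ))) := by
    have hA : Complex.exp (w*(L:ℂ)) ≠ 0 := Complex.exp_ne_zero _
    have hBne : Complex.exp (w*(x₀:ℂ)) ≠ 0 := Complex.exp_ne_zero _
    rw [show Complex.sinh (w*((L:ℂ)-(x₀:ℂ)))
        = (Complex.exp (w*((L:ℂ)-(x₀:ℂ))) - Complex.exp (-(w*((L:ℂ)-(x₀:ℂ)))))/2 from rfl,
      show Complex.cosh (w*(L:ℂ)) = (Complex.exp (w*(L:ℂ)) + Complex.exp (-(w*(L:ℂ))))/2 from rfl,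
      show Complex.cosh (w*(x₀:ℂ)) = (Complex.exp (w*(x₀:ℂ)) + Complex.exp (-(w*(x₀:ℂ))))/2 from rfl,
      show w*((L:ℂ)-(x₀:ℂ)) = w*(L:ℂ) + -(w*(x₀:ℂ)) by ring,
      show -(w*(L:ℂ) + -(w*(x₀:ℂ))) = -(w*(L:ℂ)) + w*(x₀:ℂ) by ring,
      Complex.exp_add, Complex.exp_add, Complex.exp_neg (w*(L:ℂ)), Complex.exp_neg (w*(x₀:ℂ))]
    field_simp
    ring
  -- difference identity
  have hden : 2*w*Complex.cosh (w*(L:ℂ)) ≠ 0 :=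
    mul_ne_zero (mul_ne_zero two_ne_zero hw0) hcosh_ne
  have hid : Complex.exp (-w * (x₀:ℂ)) / (2*w)
      - Complex.sinh (w * ((L:ℂ) - (x₀:ℂ))) / (2*w*Complex.cosh (w*(L:ℂ)))
      = Complex.cosh (w*(x₀:ℂ)) * Complex.exp (-(w*(L:ℂ))) / (2*w*Complex.cosh (w*(L:ℂ))) := by
    rw [show -w * (x₀:ℂ) = -(w*(x₀:ℂ)) by ring]
    field_simp
    linear_combination hnum
  -- now the estimate
  rw [Complex.dist_eq, hid]
  simp only [norm_div, norm_mul, Complex.norm_two]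
  rw [habs_exp2]
  have hcosh_ub : ‖Complex.cosh (w*(x₀:ℂ))‖ ≤ Real.exp (r*x₀) := by
    rw [show Complex.cosh (w*(x₀:ℂ)) = (Complex.exp (w*(x₀:ℂ)) + Complex.exp (-(w*(x₀:ℂ))))/2 from rfl,
      norm_div, Complex.norm_two]
    have h1 := norm_add_le (Complex.exp (w*(x₀:ℂ))) (Complex.exp (-(w*(x₀:ℂ))))
    rw [Complex.norm_exp, Complex.norm_exp, Complex.neg_re, hwx_re] at h1
    have h2 : Real.exp (-(r*x₀)) ≤ Real.exp (r*x₀) := by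
      apply Real.exp_le_exp.mpr; nlinarith
    linarith
  have hwabs_pos : 0 < ‖w‖ := lt_of_lt_of_le hm hmabs
  have hcosh_pos : 0 < ‖Complex.cosh (w*(L:ℂ))‖ :=
    lt_of_lt_of_le (by positivity) hcosh_lb
  calc ‖Complex.cosh (w*(x₀:ℂ))‖ * Real.exp (-(r*L))
        / (2 * ‖w‖ * ‖Complex.cosh (w*(L:ℂ))‖)
      ≤ Real.exp (r*x₀) * Real.exp (-(r*L)) / (2 * m * (Real.exp (r*L)/4)) := by
        gcongr
    _ = (2/m) * Real.exp (r*(x₀ - 2*L)) := by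
        rw [← Real.exp_add, show r*x₀ + -(r*L) = r*(x₀-2*L) + r*L by ring, Real.exp_add]
        field_simp
        ring
    _ ≤ (2/m) * Real.exp (c*(x₀ - 2*L)) := by
        gcongr (2/m) * ?_
        apply Real.exp_le_exp.mpr
        have hx2L : x₀ - 2*L ≤ 0 := by linarith
        nlinarith
    _ < δ := hBL

/-- For fixed `x₀ > 0`, the transfer functions
`G_{L,x₀}(s) = sinh(√s(L-x₀))/(2√s cosh(√s L))` converge as `L → ∞` to
`G_{x₀}(s) = e^{-√s x₀}/(2√s)`, uniformly on every compact subset of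
`ℂ \ (-∞, 0]`, and uniformly on `i·(ℝ \ (-ε, ε))` for every `ε > 0`.
(`√s` is the principal branch `s^(1/2)`.) -/
theorem stmt12 (x₀ : ℝ) (hx₀ : 0 < x₀) :
    (∀ K : Set ℂ, IsCompact K → K ⊆ {s : ℂ | ¬ (s.im = 0 ∧ s.re ≤ 0)} →
      TendstoUniformlyOn
        (fun (L : ℝ) (s : ℂ) =>
          Complex.sinh (s ^ ((1 : ℂ) / 2) * ((L : ℂ) - (x₀ : ℂ))) /
            (2 * s ^ ((1 : ℂ) / 2) * Complex.cosh (s ^ ((1 : ℂ) / 2) * (L : ℂ))))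
        (fun s : ℂ => Complex.exp (-(s ^ ((1 : ℂ) / 2)) * (x₀ : ℂ)) /
          (2 * s ^ ((1 : ℂ) / 2)))
        atTop K) ∧
    (∀ ε : ℝ, 0 < ε →
      TendstoUniformlyOn
        (fun (L : ℝ) (s : ℂ) =>
          Complex.sinh (s ^ ((1 : ℂ) / 2) * ((L : ℂ) - (x₀ : ℂ))) /
            (2 * s ^ ((1 : ℂ) / 2) * Complex.cosh (s ^ ((1 : ℂ) / 2) * (L : ℂ))))
        (fun s : ℂ => Complex.exp (-(s ^ ((1 : ℂ) / 2)) * (x₀ : ℂ)) /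
          (2 * s ^ ((1 : ℂ) / 2)))
        atTop {s : ℂ | ∃ ω : ℝ, ε ≤ |ω| ∧ s = Complex.I * ω}) := by
  constructor
  · -- compact subsets of the slit plane
    intro K hK hKsub
    rcases K.eq_empty_or_nonempty with rfl | hne
    · exact tendstoUniformlyOn_empty
    have hslit : ∀ s ∈ K, s ∈ Complex.slitPlane := by
      intro s hs
      have h := hKsub hs
      simp only [Set.mem_setOf_eq, not_and, not_le] at h
      rw [Complex.mem_slitPlane_iff]
      by_cases him : s.im = 0
      · exact Or.inl (h him)
      · exact Or.inr him
    have hs0 : ∀ s ∈ K, s ≠ 0 := by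
      intro s hs h0
      have := hslit s hs
      rw [h0, Complex.mem_slitPlane_iff] at this
      simp at this
    have hcont : ContinuousOn (fun s : ℂ => s ^ ((1:ℂ)/2)) K := by
      intro s hs
      exact (continuousAt_cpow_const (hslit s hs)).continuousWithinAt
    have hfcont : ContinuousOn (fun s : ℂ => (s ^ ((1:ℂ)/2)).re) K :=
      Complex.continuous_re.comp_continuousOn hcont
    have hgcont : ContinuousOn (fun s : ℂ => ‖s ^ ((1:ℂ)/2)‖) K :=
      continuous_norm.comp_continuousOn hcont
    obtain ⟨s₁, hs₁K, hmin1⟩ := hK.exists_isMinOn hne hfcont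
    obtain ⟨s₂, hs₂K, hmin2⟩ := hK.exists_isMinOn hne hgcont
    have hre_pos : ∀ s ∈ K, 0 < (s ^ ((1:ℂ)/2)).re := by
      intro s hs
      rw [re_sqrt_eq s (hs0 s hs)]
      apply Real.sqrt_pos.mpr
      have h := hslit s hs
      rw [Complex.mem_slitPlane_iff] at h
      rcases h with h | h
      · have := norm_nonneg s
        linarith
      · have h2 : |s.re| < ‖s‖ := Complex.abs_re_lt_norm.mpr h
        have := abs_nonneg s.re
        have := neg_abs_le s.re
        linarith
    have habs_pos : ∀ s ∈ K, 0 < ‖s ^ ((1:ℂ)/2)‖ := by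
      intro s hs
      apply norm_pos_iff.mpr
      intro h
      rw [Complex.cpow_eq_zero_iff] at h
      exact hs0 s hs h.1
    apply keyLemma x₀ ((s₁ ^ ((1:ℂ)/2)).re) (‖s₂ ^ ((1:ℂ)/2)‖) hx₀
      (hre_pos s₁ hs₁K) (habs_pos s₂ hs₂K)
    intro s hs
    exact ⟨hmin1 hs, hmin2 hs⟩
  · -- imaginary axis away from 0
    intro ε hε
    apply keyLemma x₀ (Real.sqrt (ε/2)) (Real.sqrt ε) hx₀
      (Real.sqrt_pos.mpr (by linarith)) (Real.sqrt_pos.mpr hε)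
    rintro s ⟨ω, hω, rfl⟩
    have hω0 : ω ≠ 0 := by
      intro h
      rw [h] at hω
      simp at hω
      linarith
    have hs0 : (Complex.I * (ω:ℂ)) ≠ 0 :=
      mul_ne_zero Complex.I_ne_zero (by exact_mod_cast hω0)
    have habs : ‖Complex.I * (ω:ℂ)‖ = |ω| := by
      rw [norm_mul, Complex.norm_I, Complex.norm_real, Real.norm_eq_abs, one_mul]
    have hre : (Complex.I * (ω:ℂ)).re = 0 := by
      simp [Complex.mul_re]
    constructor
    · rw [re_sqrt_eq _ hs0, habs, hre]
      apply Real.sqrt_le_sqrt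
      linarith
    · rw [abs_sqrt _ hs0, habs]
      exact Real.sqrt_le_sqrt hω
end

section
/- For x₀ > 0 and ω > 0, the imaginary part of G_{x₀}(iω) = e^{−√(iω) x₀}/(2√(iω)) vanishes if and only if 1 + tan(x₀√(ω/2)) = 0, i.e. if and only if ω = (4k−1)²π²/(8x₀²) for some positive integer k. -/
open Real Complex

lemma sqrt_iomega (ω : ℝ) (hω : 0 < ω) :
    (Complex.I * (ω : ℂ)) ^ ((1 : ℂ) / 2)
      = (Real.sqrt (ω / 2) : ℂ) * (1 + Complex.I) := by
  have hne : Complex.I * (ω : ℂ) ≠ 0 := by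
    simp [Complex.ext_iff, hω.ne']
  have habs : ‖Complex.I * (ω : ℂ)‖ = ω := by
    simp [abs_of_pos hω]
  have harg : Complex.arg (Complex.I * ω) = π / 2 := by
    rw [mul_comm, Complex.arg_real_mul _ hω, Complex.arg_I]
  rw [Complex.cpow_def_of_ne_zero hne, Complex.log, habs, harg]
  have heq : (↑(Real.log ω) + ↑(π / 2) * Complex.I) * ((1:ℂ) / 2)
      = (↑(Real.log ω / 2) : ℂ) + (↑(π / 4) : ℝ) * Complex.I := by
    push_cast; ring
  rw [heq, Complex.exp_add, Complex.exp_mul_I]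
  have h1 : Real.exp (Real.log ω / 2) = Real.sqrt ω := by
    rw [Real.sqrt_eq_rpow, Real.rpow_def_of_pos hω]; ring_nf
  have h2 : Real.cos (π / 4) = Real.sqrt 2 / 2 := Real.cos_pi_div_four
  have h3 : Real.sin (π / 4) = Real.sqrt 2 / 2 := Real.sin_pi_div_four
  have h4 : Real.sqrt (ω / 2) = Real.sqrt ω * (Real.sqrt 2 / 2) := by
    have ha : Real.sqrt 2 ^ 2 = 2 := Real.sq_sqrt (by norm_num)
    have hb : Real.sqrt ω ^ 2 = ω := Real.sq_sqrt hω.le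
    have hc : (Real.sqrt ω * (Real.sqrt 2 / 2)) ^ 2 = ω / 2 := by nlinarith
    rw [← hc, Real.sqrt_sq (by positivity)]
  rw [← Complex.ofReal_exp, h1, ← Complex.ofReal_cos, ← Complex.ofReal_sin, h2, h3, h4]
  push_cast
  ring

lemma tan_iff (θ : ℝ) : 1 + Real.tan θ = 0 ↔ Real.sin θ + Real.cos θ = 0 := by
  rw [Real.tan_eq_sin_div_cos]
  by_cases hc : Real.cos θ = 0
  · have hs : Real.sin θ ≠ 0 := by
      have := Real.sin_sq_add_cos_sq θ
      intro h; rw [h, hc] at this; norm_num at this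
    simp [hc]
    intro h; exact absurd h hs
  · constructor
    · intro h
      have h' : Real.cos θ * (1 + Real.sin θ / Real.cos θ) = 0 := by rw [h]; ring
      field_simp at h'
      linarith
    · intro h
      field_simp
      linarith

lemma omega_iff (x₀ ω : ℝ) (hx₀ : 0 < x₀) (hω : 0 < ω) :
    Real.sin (x₀ * Real.sqrt (ω/2)) + Real.cos (x₀ * Real.sqrt (ω/2)) = 0 ↔
      ∃ k : ℕ, 1 ≤ k ∧ ω = (4*(k:ℝ)-1)^2*π^2/(8*x₀^2) := by
  have hπ := Real.pi_pos
  set s := Real.sqrt (ω/2) with hs_def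
  have hs : 0 < s := Real.sqrt_pos.2 (by linarith)
  have hs2 : s^2 = ω/2 := Real.sq_sqrt (by linarith)
  set θ := x₀ * s with hθ_def
  have hθ : 0 < θ := mul_pos hx₀ hs
  have h22 : Real.sqrt 2 / 2 ≠ 0 := by positivity
  have key : Real.sin θ + Real.cos θ = 0 ↔ Real.sin (θ + π/4) = 0 := by
    rw [Real.sin_add, Real.cos_pi_div_four, Real.sin_pi_div_four,
      show Real.sin θ * (Real.sqrt 2/2) + Real.cos θ * (Real.sqrt 2/2)
        = (Real.sin θ + Real.cos θ) * (Real.sqrt 2/2) by ring,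
      mul_eq_zero]
    simp [h22]
  rw [key, Real.sin_eq_zero_iff]
  constructor
  · rintro ⟨n, hn⟩
    have hn0 : 0 < n := by
      by_contra h
      push_neg at h
      have : (n:ℝ) ≤ 0 := by exact_mod_cast h
      nlinarith
    have hcast : ((n.toNat : ℕ) : ℝ) = (n:ℝ) := by
      exact_mod_cast Int.toNat_of_nonneg hn0.le
    refine ⟨n.toNat, by omega, ?_⟩
    rw [hcast]
    have hs_val : s = (4*(n:ℝ)-1)*π/(4*x₀) := by
      rw [hθ_def] at hn
      field_simp
      linarith
    have hω2 : ω = 2*s^2 := by rw [hs2]; ring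
    rw [hω2, hs_val]
    field_simp
    ring
  · rintro ⟨k, hk, hωeq⟩
    have h1k : (1:ℝ) ≤ (k:ℝ) := by exact_mod_cast hk
    have hs_val : s = (4*(k:ℝ)-1)*π/(4*x₀) := by
      rw [hs_def, show ω/2 = ((4*(k:ℝ)-1)*π/(4*x₀))^2 by rw [hωeq]; field_simp; ring]
      have h4k : (0:ℝ) < 4*(k:ℝ)-1 := by linarith
      exact Real.sqrt_sq (by positivity)
    refine ⟨(k:ℤ), ?_⟩
    rw [hθ_def, hs_val]
    push_cast
    field_simp
    ring

/-- For `x₀ > 0` and `ω > 0`, the imaginary part of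
`G_{x₀}(iω) = e^{-√(iω) x₀}/(2√(iω))` (principal square root) vanishes iff
`1 + tan(x₀ √(ω/2)) = 0`, iff `ω = (4k-1)²π²/(8x₀²)` for some positive
integer `k`. -/
theorem stmt13 (x₀ ω : ℝ) (hx₀ : 0 < x₀) (hω : 0 < ω) :
    ((Complex.exp (-(((Complex.I * (ω : ℂ)) ^ ((1 : ℂ) / 2)) * (x₀ : ℂ))) /
        (2 * (Complex.I * (ω : ℂ)) ^ ((1 : ℂ) / 2))).im = 0 ↔
      1 + Real.tan (x₀ * Real.sqrt (ω / 2)) = 0) ∧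
    (1 + Real.tan (x₀ * Real.sqrt (ω / 2)) = 0 ↔
      ∃ k : ℕ, 1 ≤ k ∧ ω = (4 * (k : ℝ) - 1) ^ 2 * π ^ 2 / (8 * x₀ ^ 2)) := by
  have hs : 0 < Real.sqrt (ω/2) := Real.sqrt_pos.2 (by linarith)
  have him : (Complex.exp (-(((Real.sqrt (ω/2) : ℂ) * (1+Complex.I)) * (x₀ : ℂ))) /
        (2 * ((Real.sqrt (ω/2) : ℂ) * (1+Complex.I)))).im
      = -(Real.exp (-(x₀ * Real.sqrt (ω/2))) *
          (Real.sin (x₀ * Real.sqrt (ω/2)) + Real.cos (x₀ * Real.sqrt (ω/2)))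
            * (2 * Real.sqrt (ω/2))) / (8 * Real.sqrt (ω/2)^2) := by
    rw [Complex.div_im]
    simp [Complex.exp_re, Complex.exp_im, Complex.normSq_apply, Real.sin_neg,
      Real.cos_neg, mul_comm]
    ring_nf
  constructor
  · rw [sqrt_iomega ω hω, him, tan_iff]
    constructor
    · intro h
      have hE : Real.exp (-(x₀ * Real.sqrt (ω/2))) ≠ 0 := Real.exp_ne_zero _
      rw [div_eq_zero_iff, neg_eq_zero] at h
      rcases h with h | h
      · rcases mul_eq_zero.1 h with h' | h'
        · rcases mul_eq_zero.1 h' with h'' | h''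
          · exact absurd h'' hE
          · exact h''
        · nlinarith
      · nlinarith
    · intro h
      rw [h]
      simp
  · rw [tan_iff]
    exact omega_iff x₀ ω hx₀ hω
end

section
/- For every x₀ > 0 and every β ∈ (0, (3π/(√2 x₀)) e^{3π/4}), with q(x₀) = x₀²(8π + 32/3)/(9π³), the Popov inequality Re G_{x₀}(iω) − q(x₀) ω Im G_{x₀}(iω) ≥ −1/β holds for all ω ∈ ℝ \ {0}, where G_{x₀}(s) = e^{−√s x₀}/(2√s). -/
open Real Complex


private lemma nonneg_of_deriv_pos {f f' : ℝ → ℝ} (hd : ∀ x, HasDerivAt f (f' x) x)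
    (h0 : f 0 = 0) (hf' : ∀ x, 0 ≤ x → 0 ≤ f' x) {x : ℝ} (hx : 0 ≤ x) : 0 ≤ f x := by
  have m : MonotoneOn f (Set.Ici (0:ℝ)) := by
    apply monotoneOn_of_deriv_nonneg (convex_Ici 0)
    · exact fun y _ => (hd y).continuousAt.continuousWithinAt
    · exact fun y _ => ((hd y).differentiableAt).differentiableWithinAt
    · intro y hy
      rw [(hd y).deriv]
      exact hf' y (le_of_lt (by simpa [interior_Ici] using hy))
  have := m Set.self_mem_Ici hx hx
  simpa [h0] using this

private lemma nonneg_of_deriv_neg {f f' : ℝ → ℝ} (hd : ∀ x, HasDerivAt f (f' x) x)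
    (h0 : f 0 = 0) (hf' : ∀ x, x ≤ 0 → f' x ≤ 0) {x : ℝ} (hx : x ≤ 0) : 0 ≤ f x := by
  have m : AntitoneOn f (Set.Iic (0:ℝ)) := by
    apply antitoneOn_of_deriv_nonpos (convex_Iic 0)
    · exact fun y _ => (hd y).continuousAt.continuousWithinAt
    · exact fun y _ => ((hd y).differentiableAt).differentiableWithinAt
    · intro y hy
      rw [(hd y).deriv]
      exact hf' y (le_of_lt (by simpa [interior_Iic] using hy))
  have := m hx Set.self_mem_Iic hx
  simpa [h0] using this

private lemma sin_ge_cubic {x : ℝ} (hx : 0 ≤ x) : x - x^3/6 ≤ Real.sin x := by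
  have h : 0 ≤ Real.sin x - (x - x^3/6) := by
    apply nonneg_of_deriv_pos (f' := fun y => Real.cos y - (1 - y^2/2))
      (fun y => by
        have : HasDerivAt (fun z : ℝ => Real.sin z - (z - z^3/6))
            (Real.cos y - (1 - (3:ℕ) * y^(3-1)/6)) y := by
          exact (Real.hasDerivAt_sin y).sub ((hasDerivAt_id y).sub ((hasDerivAt_pow 3 y).div_const 6))
        convert this using 1; push_cast; ring)
      (by norm_num)
      (fun y _ => by have := Real.one_sub_sq_div_two_le_cos (x := y); linarith) hx
  linarith

private lemma sin_le_cubic {x : ℝ} (hx : x ≤ 0) : Real.sin x ≤ x - x^3/6 := by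
  have h : 0 ≤ (x - x^3/6) - Real.sin x := by
    apply nonneg_of_deriv_neg (f' := fun y => (1 - y^2/2) - Real.cos y)
      (fun y => by
        have : HasDerivAt (fun z : ℝ => (z - z^3/6) - Real.sin z)
            ((1 - (3:ℕ) * y^(3-1)/6) - Real.cos y) y := by
          exact ((hasDerivAt_id y).sub ((hasDerivAt_pow 3 y).div_const 6)).sub (Real.hasDerivAt_sin y)
        convert this using 1; push_cast; ring)
      (by norm_num)
      (fun y _ => by have := Real.one_sub_sq_div_two_le_cos (x := y); linarith) hx
  linarith

private lemma cos_le_quartic (x : ℝ) : Real.cos x ≤ 1 - x^2/2 + x^4/24 := by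
  have hd : ∀ y : ℝ, HasDerivAt (fun z : ℝ => (1 - z^2/2 + z^4/24) - Real.cos z)
      ((Real.sin y) - (y - y^3/6)) y := by
    intro y
    have : HasDerivAt (fun z : ℝ => (1 - z^2/2 + z^4/24) - Real.cos z)
        (((0 - (2:ℕ)*y^(2-1)/2) + (4:ℕ)*y^(4-1)/24) - (-Real.sin y)) y := by
      exact (((hasDerivAt_const y (1:ℝ)).sub ((hasDerivAt_pow 2 y).div_const 2)).add
        ((hasDerivAt_pow 4 y).div_const 24)).sub (Real.hasDerivAt_cos y)
    convert this using 1; push_cast; ring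
  have h : 0 ≤ (1 - x^2/2 + x^4/24) - Real.cos x := by
    rcases le_total 0 x with hx | hx
    · exact nonneg_of_deriv_pos hd (by norm_num)
        (fun y hy => by have := sin_ge_cubic hy; linarith) hx
    · exact nonneg_of_deriv_neg hd (by norm_num)
        (fun y hy => by have := sin_le_cubic hy; linarith) hx
  linarith

private lemma sin_le_quintic {x : ℝ} (hx : 0 ≤ x) : Real.sin x ≤ x - x^3/6 + x^5/120 := by
  have h : 0 ≤ (x - x^3/6 + x^5/120) - Real.sin x := by
    apply nonneg_of_deriv_pos (f' := fun y => (1 - y^2/2 + y^4/24) - Real.cos y)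
      (fun y => by
        have : HasDerivAt (fun z : ℝ => (z - z^3/6 + z^5/120) - Real.sin z)
            (((1 - (3:ℕ)*y^(3-1)/6) + (5:ℕ)*y^(5-1)/120) - Real.cos y) y := by
          exact (((hasDerivAt_id y).sub ((hasDerivAt_pow 3 y).div_const 6)).add
            ((hasDerivAt_pow 5 y).div_const 120)).sub (Real.hasDerivAt_sin y)
        convert this using 1; push_cast; ring)
      (by norm_num)
      (fun y _ => by have := cos_le_quartic y; linarith) hx
  linarith

private lemma exp_le_quadratic {x : ℝ} (hx : x ≤ 0) : Real.exp x ≤ 1 + x + x^2/2 := by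
  have h : 0 ≤ (1 + x + x^2/2) - Real.exp x := by
    apply nonneg_of_deriv_neg (f' := fun y => (1 + y) - Real.exp y)
      (fun y => by
        have : HasDerivAt (fun z : ℝ => (1 + z + z^2/2) - Real.exp z)
            (((0 + 1) + (2:ℕ)*y^(2-1)/2) - Real.exp y) y := by
          exact (((hasDerivAt_const y (1:ℝ)).add (hasDerivAt_id y)).add
            ((hasDerivAt_pow 2 y).div_const 2)).sub (Real.hasDerivAt_exp y)
        convert this using 1; push_cast; ring)
      (by norm_num)
      (fun y _ => by show (1 + y) - Real.exp y ≤ 0; linarith [Real.add_one_le_exp y]) hx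
  linarith

private lemma cubic_le_exp (x : ℝ) : 1 + x + x^2/2 + x^3/6 ≤ Real.exp x := by
  rcases le_total 0 x with hx | hx
  · have := Real.sum_le_exp_of_nonneg hx 4
    simp [Finset.sum_range_succ, Nat.factorial] at this
    linarith
  · have h : 0 ≤ Real.exp x - (1 + x + x^2/2 + x^3/6) := by
      apply nonneg_of_deriv_neg (f' := fun y => Real.exp y - (1 + y + y^2/2))
        (fun y => by
          have : HasDerivAt (fun z : ℝ => Real.exp z - (1 + z + z^2/2 + z^3/6))
              (Real.exp y - (((0 + 1) + (2:ℕ)*y^(2-1)/2) + (3:ℕ)*y^(3-1)/6)) y := by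
            exact (Real.hasDerivAt_exp y).sub ((((hasDerivAt_const y (1:ℝ)).add
              (hasDerivAt_id y)).add ((hasDerivAt_pow 2 y).div_const 2)).add
              ((hasDerivAt_pow 3 y).div_const 6))
          convert this using 1; push_cast; ring)
        (by norm_num)
        (fun y hy => by have := exp_le_quadratic hy; linarith) hx
    linarith

private lemma quartic_le_exp {x : ℝ} (hx : 0 ≤ x) :
    1 + x + x^2/2 + x^3/6 + x^4/24 ≤ Real.exp x := by
  have := Real.sum_le_exp_of_nonneg hx 5
  simp [Finset.sum_range_succ, Nat.factorial] at this
  linarith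

private lemma Qa_nonneg {k t : ℝ} (hk1 : 0.42441 ≤ k) (hk2 : k ≤ 0.42442)
    (ht0 : t ≤ 0) (ht : -1 ≤ k*t) :
    0 ≤ (1-k-2*k^2) + t*(1/3 + 2*k/3 - k^2 - k^3) + t^2*(-1/24 + k/2 + k^2/3)
      + t^3*(k^2/6 + k^3/6) := by
  have htl : -2.3563 ≤ t := by nlinarith [mul_nonneg (sub_nonneg.2 hk1) (neg_nonneg.2 ht0)]
  have hA : 0.2153 ≤ 1-k-2*k^2 := by nlinarith
  have hB : 1/3+2*k/3-k^2-k^3 ≤ 0.3598 := by nlinarith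
  have hC : 0.2305 ≤ -1/24+k/2+k^2/3 := by nlinarith
  have hD : k^2/6+k^3/6 ≤ 0.04277 := by nlinarith
  have hR : 0 ≤ 0.2153 + 0.3598*t + 0.2305*t^2 + 0.04277*t^3 := by
    nlinarith [sq_nonneg (t+1.2), sq_nonneg (t+1),
      mul_nonneg (neg_nonneg.2 ht0) (by linarith : (0:ℝ) ≤ t+2.3563),
      sq_nonneg (t*(t+1.2)),
      mul_nonneg (mul_nonneg (neg_nonneg.2 ht0) (neg_nonneg.2 ht0)) (by linarith : (0:ℝ) ≤ t+2.3563)]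
  nlinarith [mul_nonneg (sub_nonneg.2 hB) (neg_nonneg.2 ht0),
    mul_nonneg (sub_nonneg.2 hC) (sq_nonneg t),
    mul_nonneg (sub_nonneg.2 hD) (mul_nonneg (mul_nonneg (neg_nonneg.2 ht0) (neg_nonneg.2 ht0)) (neg_nonneg.2 ht0))]

private lemma Qb_nonneg {k t : ℝ} (hk1 : 0.42441 ≤ k) (hk2 : k ≤ 0.42442)
    (ht0 : 0 ≤ t) (ht : t ≤ 1.5) :
    0 ≤ (1-k-2*k^2) + t*(1/3 + 2*k/3 - k^2 - k^3) + t^2*(k/2 + k^2/3)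
      + t^3*(-1/120 + k/30 + k^2/6 + k^3/6) + t^4*(-(k/60) - k^2/60)
      + t^5*(-(k^2/120) - k^3/120) := by
  have hA : 0.2153 ≤ 1-k-2*k^2 := by nlinarith
  have hB : 0.3596 ≤ 1/3+2*k/3-k^2-k^3 := by nlinarith
  have hC : 0.2722 ≤ k/2+k^2/3 := by nlinarith
  have hD : 0.04857 ≤ -1/120+k/30+k^2/6+k^3/6 := by nlinarith
  have hE : -0.010076 ≤ -(k/60)-k^2/60 := by nlinarith
  have hF : -0.002139 ≤ -(k^2/120)-k^3/120 := by nlinarith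
  have hR : 0 ≤ 0.2153 + 0.3596*t + 0.2722*t^2 + 0.04857*t^3 - 0.010076*t^4 - 0.002139*t^5 := by
    nlinarith [mul_nonneg (mul_nonneg (mul_nonneg ht0 ht0) (mul_nonneg ht0 ht0)) (by linarith : (0:ℝ) ≤ 1.5 - t),
      mul_nonneg (mul_nonneg ht0 (mul_nonneg ht0 ht0)) (by linarith : (0:ℝ) ≤ 1.5 - t),
      mul_nonneg ht0 ht0]
  nlinarith [mul_nonneg (sub_nonneg.2 hB) ht0,
    mul_nonneg (sub_nonneg.2 hC) (sq_nonneg t),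
    mul_nonneg (sub_nonneg.2 hD) (mul_nonneg (mul_nonneg ht0 ht0) ht0),
    mul_nonneg (sub_nonneg.2 hE) (mul_nonneg (mul_nonneg ht0 ht0) (mul_nonneg ht0 ht0)),
    mul_nonneg (sub_nonneg.2 hF) (mul_nonneg (mul_nonneg (mul_nonneg ht0 ht0) (mul_nonneg ht0 ht0)) ht0)]

private lemma key_ineq {k t : ℝ} (hk1 : 0.42441 ≤ k) (hk2 : k ≤ 0.42442) (ht : -1 < k*t) :
    Real.cos t + (1+k)*(1+k*t)^2 * Real.sin t ≤ (1+k*t) * Real.exp t := by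
  have hkt : (0:ℝ) ≤ 1 + k*t := by linarith
  have hco : (0:ℝ) ≤ (1+k)*(1+k*t)^2 := by positivity
  rcases le_total t 0 with ht0 | ht0
  · have hs := sin_le_cubic ht0
    have hc := cos_le_quartic t
    have he := cubic_le_exp t
    have hQ := Qa_nonneg hk1 hk2 ht0 ht.le
    have hpoly : (1-t^2/2+t^4/24) + (1+k)*(1+k*t)^2*(t-t^3/6)
        ≤ (1+k*t)*(1+t+t^2/2+t^3/6) := by
      have h2 : 0 ≤ t^2 * ((1-k-2*k^2) + t*(1/3 + 2*k/3 - k^2 - k^3)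
          + t^2*(-1/24 + k/2 + k^2/3) + t^3*(k^2/6 + k^3/6)) :=
        mul_nonneg (sq_nonneg t) hQ
      nlinarith [h2]
    calc Real.cos t + (1+k)*(1+k*t)^2 * Real.sin t
        ≤ (1-t^2/2+t^4/24) + (1+k)*(1+k*t)^2*(t-t^3/6) := by
          exact add_le_add hc (mul_le_mul_of_nonneg_left hs hco)
      _ ≤ (1+k*t)*(1+t+t^2/2+t^3/6) := hpoly
      _ ≤ (1+k*t) * Real.exp t := mul_le_mul_of_nonneg_left he hkt
  · rcases le_total t 1.5 with ht1 | ht1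
    · have hs := sin_le_quintic ht0
      have hc := cos_le_quartic t
      have he := quartic_le_exp ht0
      have hQ := Qb_nonneg hk1 hk2 ht0 ht1
      have hpoly : (1-t^2/2+t^4/24) + (1+k)*(1+k*t)^2*(t-t^3/6+t^5/120)
          ≤ (1+k*t)*(1+t+t^2/2+t^3/6+t^4/24) := by
        have h2 : 0 ≤ t^2 * ((1-k-2*k^2) + t*(1/3 + 2*k/3 - k^2 - k^3) + t^2*(k/2 + k^2/3)
            + t^3*(-1/120 + k/30 + k^2/6 + k^3/6) + t^4*(-(k/60) - k^2/60)
            + t^5*(-(k^2/120) - k^3/120)) := mul_nonneg (sq_nonneg t) hQ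
        nlinarith [h2]
      calc Real.cos t + (1+k)*(1+k*t)^2 * Real.sin t
          ≤ (1-t^2/2+t^4/24) + (1+k)*(1+k*t)^2*(t-t^3/6+t^5/120) := by
            exact add_le_add hc (mul_le_mul_of_nonneg_left hs hco)
        _ ≤ (1+k*t)*(1+t+t^2/2+t^3/6+t^4/24) := hpoly
        _ ≤ (1+k*t) * Real.exp t := mul_le_mul_of_nonneg_left he hkt
    · have he := quartic_le_exp ht0
      have hbig : 1 + (1+k)*(1+k*t)^2 ≤ (1+k*t)*(1+t+t^2/2+t^3/6+t^4/24) := by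
        nlinarith [mul_nonneg (by nlinarith : (0:ℝ) ≤ t - 1.5) (by nlinarith : (0:ℝ) ≤ t - 1.5),
          mul_nonneg (mul_nonneg (by nlinarith : (0:ℝ) ≤ t - 1.5) (by nlinarith : (0:ℝ) ≤ t - 1.5)) (by nlinarith : (0:ℝ) ≤ t - 1.5),
          mul_pos (by nlinarith : (0:ℝ) < 1 + k*t) (by nlinarith : (0:ℝ) < t),
          sq_nonneg (t - 1.5),
          mul_nonneg (mul_nonneg (mul_nonneg (by nlinarith : (0:ℝ) ≤ t-1.5) (by nlinarith : (0:ℝ) ≤ t-1.5)) (by nlinarith : (0:ℝ) ≤ t-1.5)) (by nlinarith : (0:ℝ) ≤ t-1.5)]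
      calc Real.cos t + (1+k)*(1+k*t)^2 * Real.sin t
          ≤ 1 + (1+k)*(1+k*t)^2 * 1 :=
            add_le_add (Real.cos_le_one t) (mul_le_mul_of_nonneg_left (Real.sin_le_one t) hco)
        _ ≤ (1+k*t)*(1+t+t^2/2+t^3/6+t^4/24) := by linarith [hbig]
        _ ≤ (1+k*t) * Real.exp t := mul_le_mul_of_nonneg_left he hkt

private lemma k_bounds : 0.42441 ≤ 4/(3*π) ∧ 4/(3*π) ≤ 0.42442 := by
  constructor
  · rw [le_div_iff₀ (by positivity)]
    nlinarith [pi_lt_d6]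
  · rw [div_le_iff₀ (by positivity)]
    nlinarith [pi_gt_d6]

private lemma core (x₀ s : ℝ) (hx₀ : 0 < x₀) (hs : 0 < s) :
    -(Real.sqrt 2 * x₀ * Real.exp (-(3*π/4)) / (3*π)) ≤
    Real.exp (-(s*x₀)) * (Real.cos (s*x₀) - Real.sin (s*x₀)) / (4*s)
      + (x₀^2*(8*π+32/3)/(9*π^3)) * (2*s^2) *
        (Real.exp (-(s*x₀)) * (Real.cos (s*x₀) + Real.sin (s*x₀)) / (4*s)) := by
  have hπ : (0:ℝ) < π := pi_pos
  set k : ℝ := 4/(3*π) with hk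
  set u : ℝ := s*x₀ with hudef
  have hu : 0 < u := mul_pos hs hx₀
  set t : ℝ := u - 3*π/4 with htdef
  have hku : 0 < k*u := mul_pos (by positivity) hu
  have hkt : k*t = k*u - 1 := by
    have h1 : k*(3*π/4) = 1 := by rw [hk]; field_simp
    calc k*t = k*u - k*(3*π/4) := by rw [htdef]; ring
      _ = k*u - 1 := by rw [h1]
  have hkey := key_ineq k_bounds.1 k_bounds.2 (by rw [hkt]; linarith : -1 < k*t)
  -- trig rotation
  have h34c : Real.cos (3*π/4) = -(Real.sqrt 2/2) := by
    rw [show (3*π/4 : ℝ) = π - π/4 by ring, Real.cos_pi_sub, Real.cos_pi_div_four]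
  have h34s : Real.sin (3*π/4) = Real.sqrt 2/2 := by
    rw [show (3*π/4 : ℝ) = π - π/4 by ring, Real.sin_pi_sub, Real.sin_pi_div_four]
  have hueq : u = t + 3*π/4 := by rw [htdef]; ring
  have hc1 : Real.cos u - Real.sin u = -(Real.sqrt 2) * Real.cos t := by
    rw [hueq, Real.cos_add, Real.sin_add, h34c, h34s]; ring
  have hc2 : Real.cos u + Real.sin u = -(Real.sqrt 2) * Real.sin t := by
    rw [hueq, Real.cos_add, Real.sin_add, h34c, h34s]; ring
  have he : Real.exp (-u) * Real.exp t = Real.exp (-(3*π/4)) := by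
    rw [← Real.exp_add]; congr 1; rw [htdef]; ring
  have hepos : 0 < Real.exp (-u) := Real.exp_pos _
  -- rewrite RHS
  have hcoef : (x₀^2*(8*π+32/3)/(9*π^3)) * (2*s^2) = (1+k)*(k*u)^2 := by
    rw [hk, hudef]; field_simp; ring
  have hrhs : Real.exp (-u) * (Real.cos u - Real.sin u) / (4*s)
      + (x₀^2*(8*π+32/3)/(9*π^3)) * (2*s^2) *
        (Real.exp (-u) * (Real.cos u + Real.sin u) / (4*s))
      = (-(Real.sqrt 2) * Real.exp (-u) / (4*s)) *
        (Real.cos t + (1+k)*(1+k*t)^2 * Real.sin t) := by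
    rw [hc1, hc2, hcoef, hkt]
    field_simp
    ring
  rw [hrhs]
  have hneg : -(Real.sqrt 2) * Real.exp (-u) / (4*s) ≤ 0 := by
    have : (0:ℝ) < Real.sqrt 2 := by positivity
    have h4s : (0:ℝ) < 4*s := by linarith
    apply div_nonpos_of_nonpos_of_nonneg _ (le_of_lt h4s)
    nlinarith
  have hstep := mul_le_mul_of_nonpos_left hkey hneg
  refine le_trans ?_ hstep
  have hfin : -(Real.sqrt 2) * Real.exp (-u) / (4*s) * ((1+k*t) * Real.exp t)
      = -(Real.sqrt 2 * x₀ * Real.exp (-(3*π/4)) / (3*π)) := by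
    rw [hkt]
    have : (1 + (k*u - 1)) = k*u := by ring
    rw [this]
    have expand : -(Real.sqrt 2) * Real.exp (-u) / (4*s) * (k*u * Real.exp t)
        = -(Real.sqrt 2) * (Real.exp (-u) * Real.exp t) * (k*u) / (4*s) := by ring
    rw [expand, he, hk, hudef]
    field_simp
  rw [hfin]


private lemma cpow_half_pos {ω : ℝ} (hω : 0 < ω) :
    (Complex.I * (ω:ℂ)) ^ ((1:ℂ)/2) = ((Real.sqrt (ω/2) : ℝ) : ℂ) * (1 + Complex.I) := by
  have hz : Complex.I * (ω:ℂ) ≠ 0 := by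
    simp [Complex.ext_iff, hω.ne']
  have habs : ‖Complex.I * (ω:ℂ)‖ = ω := by
    simp [map_mul, abs_of_pos hω]
  have harg : (Complex.I * (ω:ℂ)).arg = π/2 := by
    rw [mul_comm, Complex.arg_real_mul _ hω, Complex.arg_I]
  have hlog : Complex.log (Complex.I * (ω:ℂ)) = ((Real.log ω : ℝ):ℂ) + ((π/2 : ℝ):ℂ)*Complex.I := by
    apply Complex.ext
    · simp [Complex.log_re, habs]
    · simp [Complex.log_im, harg]
  rw [Complex.cpow_def_of_ne_zero hz, hlog]
  have : (((Real.log ω : ℝ):ℂ) + ((π/2 : ℝ):ℂ)*Complex.I) * (1/2)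
      = ((Real.log ω / 2 : ℝ):ℂ) + ((π/4 : ℝ):ℂ)*Complex.I := by push_cast; ring
  rw [this, Complex.exp_add, Complex.exp_mul_I, ← Complex.ofReal_exp, ← Complex.ofReal_cos,
    ← Complex.ofReal_sin, Real.cos_pi_div_four, Real.sin_pi_div_four]
  have hexp : Real.exp (Real.log ω / 2) = Real.sqrt ω := by
    rw [Real.sqrt_eq_rpow, Real.rpow_def_of_pos hω]; ring_nf
  rw [hexp]
  have hs2 : Real.sqrt (ω/2) = Real.sqrt ω * (Real.sqrt 2 / 2) := by
    rw [Real.sqrt_div' ω (by norm_num : (0:ℝ) ≤ 2)]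
    have h2 : Real.sqrt 2 * Real.sqrt 2 = 2 := Real.mul_self_sqrt (by norm_num)
    have h2pos : (0:ℝ) < Real.sqrt 2 := Real.sqrt_pos.2 (by norm_num)
    field_simp
    nlinarith [Real.sqrt_nonneg ω]
  rw [hs2]
  push_cast
  ring

private lemma cpow_half_neg {ω : ℝ} (hω : ω < 0) :
    (Complex.I * (ω:ℂ)) ^ ((1:ℂ)/2) = ((Real.sqrt (-ω/2) : ℝ) : ℂ) * (1 - Complex.I) := by
  have hω' : 0 < -ω := by linarith
  have hz : Complex.I * (ω:ℂ) ≠ 0 := by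
    simp [Complex.ext_iff, hω.ne]
  have habs : ‖Complex.I * (ω:ℂ)‖ = -ω := by
    simp [map_mul, abs_of_neg hω]
  have hrw : Complex.I * (ω:ℂ) = ((-ω : ℝ):ℂ) * (-Complex.I) := by push_cast; ring
  have harg : (Complex.I * (ω:ℂ)).arg = -(π/2) := by
    rw [hrw, Complex.arg_real_mul _ hω', Complex.arg_neg_I]
  have hlog : Complex.log (Complex.I * (ω:ℂ)) = ((Real.log (-ω) : ℝ):ℂ) + ((-(π/2) : ℝ):ℂ)*Complex.I := by
    apply Complex.ext
    · simp [Complex.log_re, habs]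
    · simp [Complex.log_im, harg]
  rw [Complex.cpow_def_of_ne_zero hz, hlog]
  have : (((Real.log (-ω) : ℝ):ℂ) + ((-(π/2) : ℝ):ℂ)*Complex.I) * (1/2)
      = ((Real.log (-ω) / 2 : ℝ):ℂ) + ((-(π/4) : ℝ):ℂ)*Complex.I := by push_cast; ring
  rw [this, Complex.exp_add, Complex.exp_mul_I, ← Complex.ofReal_exp, ← Complex.ofReal_cos,
    ← Complex.ofReal_sin, Real.cos_neg, Real.sin_neg, Real.cos_pi_div_four, Real.sin_pi_div_four]
  have hexp : Real.exp (Real.log (-ω) / 2) = Real.sqrt (-ω) := by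
    rw [Real.sqrt_eq_rpow, Real.rpow_def_of_pos hω']; ring_nf
  rw [hexp]
  have hs2 : Real.sqrt (-ω/2) = Real.sqrt (-ω) * (Real.sqrt 2 / 2) := by
    rw [Real.sqrt_div' (-ω) (by norm_num : (0:ℝ) ≤ 2)]
    have h2 : Real.sqrt 2 * Real.sqrt 2 = 2 := Real.mul_self_sqrt (by norm_num)
    have h2pos : (0:ℝ) < Real.sqrt 2 := Real.sqrt_pos.2 (by norm_num)
    field_simp
    nlinarith [Real.sqrt_nonneg (-ω)]
  rw [hs2]
  push_cast
  ring

private lemma one_add_I_ne : (1 + Complex.I) ≠ 0 := by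
  intro h; simpa using congrArg Complex.re h

private lemma one_sub_I_ne : (1 - Complex.I) ≠ 0 := by
  intro h; simpa using congrArg Complex.re h

private lemma div_aux_pos (s E C S : ℝ) (hs : s ≠ 0) :
    ((E:ℂ) * ((C:ℂ) - (S:ℂ)*Complex.I)) / (2 * ((s:ℂ) * (1 + Complex.I)))
      = ((E*(C-S)/(4*s) : ℝ) : ℂ) + ((-(E*(C+S))/(4*s) : ℝ) : ℂ) * Complex.I := by
  have hden : (2 * ((s:ℂ)*(1+Complex.I))) ≠ 0 :=
    mul_ne_zero two_ne_zero (mul_ne_zero (Complex.ofReal_ne_zero.2 hs) one_add_I_ne)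
  have hsC : (s:ℂ) ≠ 0 := Complex.ofReal_ne_zero.2 hs
  rw [div_eq_iff hden]
  push_cast
  field_simp
  ring_nf
  simp [Complex.I_sq]
  all_goals ring

private lemma div_aux_neg (s E C S : ℝ) (hs : s ≠ 0) :
    ((E:ℂ) * ((C:ℂ) + (S:ℂ)*Complex.I)) / (2 * ((s:ℂ) * (1 - Complex.I)))
      = ((E*(C-S)/(4*s) : ℝ) : ℂ) + ((E*(C+S)/(4*s) : ℝ) : ℂ) * Complex.I := by
  have hden : (2 * ((s:ℂ)*(1-Complex.I))) ≠ 0 :=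
    mul_ne_zero two_ne_zero (mul_ne_zero (Complex.ofReal_ne_zero.2 hs) one_sub_I_ne)
  have hsC : (s:ℂ) ≠ 0 := Complex.ofReal_ne_zero.2 hs
  rw [div_eq_iff hden]
  push_cast
  field_simp
  ring_nf
  simp [Complex.I_sq]
  all_goals ring

private lemma G_val_pos (s x₀ : ℝ) (hs : 0 < s) :
    Complex.exp (-(((s:ℂ) * (1 + Complex.I)) * (x₀:ℂ))) / (2 * ((s:ℂ) * (1 + Complex.I)))
      = ((Real.exp (-(s*x₀)) * (Real.cos (s*x₀) - Real.sin (s*x₀)) / (4*s) : ℝ) : ℂ)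
        + ((-(Real.exp (-(s*x₀)) * (Real.cos (s*x₀) + Real.sin (s*x₀))) / (4*s) : ℝ) : ℂ) * Complex.I := by
  have h1 : -(((s:ℂ)*(1+Complex.I))*(x₀:ℂ)) = ((-(s*x₀):ℝ):ℂ) + ((-(s*x₀):ℝ):ℂ)*Complex.I := by
    push_cast; ring
  have hexp : Complex.exp (-(((s:ℂ)*(1+Complex.I))*(x₀:ℂ)))
      = ((Real.exp (-(s*x₀)) : ℝ):ℂ) *
        (((Real.cos (s*x₀):ℝ):ℂ) - ((Real.sin (s*x₀):ℝ):ℂ)*Complex.I) := by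
    rw [h1, Complex.exp_add, Complex.exp_mul_I, ← Complex.ofReal_exp, ← Complex.ofReal_cos,
      ← Complex.ofReal_sin, Real.cos_neg, Real.sin_neg]
    push_cast; ring
  rw [hexp, div_aux_pos s _ _ _ hs.ne']

private lemma G_val_neg (s x₀ : ℝ) (hs : 0 < s) :
    Complex.exp (-(((s:ℂ) * (1 - Complex.I)) * (x₀:ℂ))) / (2 * ((s:ℂ) * (1 - Complex.I)))
      = ((Real.exp (-(s*x₀)) * (Real.cos (s*x₀) - Real.sin (s*x₀)) / (4*s) : ℝ) : ℂ)
        + ((Real.exp (-(s*x₀)) * (Real.cos (s*x₀) + Real.sin (s*x₀)) / (4*s) : ℝ) : ℂ) * Complex.I := by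
  have h1 : -(((s:ℂ)*(1-Complex.I))*(x₀:ℂ)) = ((-(s*x₀):ℝ):ℂ) + (((s*x₀):ℝ):ℂ)*Complex.I := by
    push_cast; ring
  have hexp : Complex.exp (-(((s:ℂ)*(1-Complex.I))*(x₀:ℂ)))
      = ((Real.exp (-(s*x₀)) : ℝ):ℂ) *
        (((Real.cos (s*x₀):ℝ):ℂ) + ((Real.sin (s*x₀):ℝ):ℂ)*Complex.I) := by
    rw [h1, Complex.exp_add, Complex.exp_mul_I, ← Complex.ofReal_exp, ← Complex.ofReal_cos,
      ← Complex.ofReal_sin]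
  rw [hexp, div_aux_neg s _ _ _ hs.ne']


/-- Popov criterion on the line: for every `x₀ > 0` and every
`β ∈ (0, (3π/(√2 x₀)) e^{3π/4})`, with `q(x₀) = x₀²(8π + 32/3)/(9π³)`, the
inequality `Re G_{x₀}(iω) - q(x₀) ω Im G_{x₀}(iω) ≥ -1/β` holds for every
`ω ≠ 0`, where `G_{x₀}(s) = e^{-√s x₀}/(2√s)` (principal square root). -/
theorem stmt15 (x₀ : ℝ) (hx₀ : 0 < x₀) (β : ℝ)
    (hβ : β ∈ Set.Ioo 0 (3 * π / (Real.sqrt 2 * x₀) * Real.exp (3 * π / 4))) :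
    ∀ ω : ℝ, ω ≠ 0 →
      (Complex.exp (-(((Complex.I * (ω : ℂ)) ^ ((1 : ℂ) / 2)) * (x₀ : ℂ))) /
          (2 * (Complex.I * (ω : ℂ)) ^ ((1 : ℂ) / 2))).re -
        (x₀ ^ 2 * (8 * π + 32 / 3) / (9 * π ^ 3)) * ω *
          (Complex.exp (-(((Complex.I * (ω : ℂ)) ^ ((1 : ℂ) / 2)) * (x₀ : ℂ))) /
            (2 * (Complex.I * (ω : ℂ)) ^ ((1 : ℂ) / 2))).im ≥
        -1 / β := by
  obtain ⟨hβ0, hβ1⟩ := hβ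
  intro ω hω
  have hbound : -1/β ≤ -(Real.sqrt 2 * x₀ * Real.exp (-(3*π/4)) / (3*π)) := by
    have hs2 : (0:ℝ) < Real.sqrt 2 := Real.sqrt_pos.2 (by norm_num)
    have h1 : 1 / (3*π/(Real.sqrt 2*x₀) * Real.exp (3*π/4)) < 1/β :=
      one_div_lt_one_div_of_lt hβ0 hβ1
    have h2 : 1 / (3*π/(Real.sqrt 2*x₀)*Real.exp (3*π/4))
        = Real.sqrt 2 * x₀ * Real.exp (-(3*π/4)) / (3*π) := by
      rw [Real.exp_neg]
      have hπ : (0:ℝ) < π := pi_pos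
      have he : (0:ℝ) < Real.exp (3*π/4) := Real.exp_pos _
      field_simp
    rw [h2] at h1
    have h3 : -1/β = -(1/β) := by ring
    linarith
  rcases hω.lt_or_gt with hneg | hpos
  · -- ω < 0
    have hs : 0 < Real.sqrt (-ω/2) := Real.sqrt_pos.2 (by linarith)
    have hsq : (Real.sqrt (-ω/2))^2 = -ω/2 := Real.sq_sqrt (by linarith)
    rw [cpow_half_neg hneg, G_val_neg _ x₀ hs]
    simp only [Complex.add_re, Complex.add_im, Complex.ofReal_re, Complex.ofReal_im,
      Complex.mul_re, Complex.mul_im, Complex.I_re, Complex.I_im]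
    generalize hsdef : Real.sqrt (-ω/2) = s at hs hsq
    have hω2 : ω = -(2*s^2) := by linarith
    have hcore := core x₀ s hx₀ hs
    rw [ge_iff_le, hω2]
    refine le_trans (le_trans hbound hcore) (le_of_eq ?_)
    ring
  · -- ω > 0
    have hs : 0 < Real.sqrt (ω/2) := Real.sqrt_pos.2 (by linarith)
    have hsq : (Real.sqrt (ω/2))^2 = ω/2 := Real.sq_sqrt (by linarith)
    rw [cpow_half_pos hpos, G_val_pos _ x₀ hs]
    simp only [Complex.add_re, Complex.add_im, Complex.ofReal_re, Complex.ofReal_im,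
      Complex.mul_re, Complex.mul_im, Complex.I_re, Complex.I_im]
    generalize hsdef : Real.sqrt (ω/2) = s at hs hsq
    have hω2 : ω = 2*s^2 := by linarith
    have hcore := core x₀ s hx₀ hs
    rw [ge_iff_le, hω2]
    refine le_trans (le_trans hbound hcore) (le_of_eq ?_)
    ring
end

section
/- Let T(y) = (y² − d y − d/2)/(2y³ − y² − d/2) with d = 9π³/(8π + 32/3). The cubic 2y³ − y² − d/2 has exactly one real root y_s, y_s ∈ (1.43, 1.45), and in particular y_s < π/2; moreover every solution y > 0 of tan(y) = T(y) satisfies y > y_s. -/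
open Real

private lemma d_bounds : 7.79 < 9 * π ^ 3 / (8 * π + 32 / 3) ∧
    9 * π ^ 3 / (8 * π + 32 / 3) < 7.80 := by
  have h1 := Real.pi_gt_d6
  have h2 := Real.pi_lt_d6
  have hden : (0:ℝ) < 8 * π + 32 / 3 := by nlinarith
  constructor
  · rw [lt_div_iff₀ hden]
    nlinarith [sq_nonneg (π - 3.141592), sq_nonneg π, Real.pi_pos]
  · rw [div_lt_iff₀ hden]
    nlinarith [sq_nonneg (π - 3.141593), sq_nonneg π, Real.pi_pos]

set_option maxHeartbeats 2000000 in
private lemma stmt16_aux (d : ℝ) (hd1 : 7.79 < d) (hd2 : d < 7.80) :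
    ∃ ys : ℝ,
      (∀ y : ℝ, 2 * y ^ 3 - y ^ 2 - d / 2 = 0 ↔ y = ys) ∧
      ys ∈ Set.Ioo (1.43 : ℝ) (1.45 : ℝ) ∧
      ys < π / 2 ∧
      ∀ y : ℝ, 0 < y →
        Real.tan y = (y ^ 2 - d * y - d / 2) / (2 * y ^ 3 - y ^ 2 - d / 2) →
        ys < y := by
  have hpi1 := Real.pi_gt_d6
  have hpi2 := Real.pi_lt_d6
  have hcont : ContinuousOn (fun y : ℝ => 2 * y ^ 3 - y ^ 2 - d / 2)
      (Set.Icc (1.43:ℝ) 1.45) := by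
    apply Continuous.continuousOn; fun_prop
  have hfa : (2 * (1.43:ℝ) ^ 3 - 1.43 ^ 2 - d / 2) < 0 := by nlinarith
  have hfb : 0 < (2 * (1.45:ℝ) ^ 3 - 1.45 ^ 2 - d / 2) := by nlinarith
  have h0 : (0:ℝ) ∈ Set.Ioo (2 * (1.43:ℝ) ^ 3 - 1.43 ^ 2 - d / 2)
      (2 * (1.45:ℝ) ^ 3 - 1.45 ^ 2 - d / 2) := ⟨hfa, hfb⟩
  obtain ⟨ys, hysmem, hfys⟩ :=
    intermediate_value_Ioo (by norm_num : (1.43:ℝ) ≤ 1.45) hcont h0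
  obtain ⟨hys1, hys2⟩ := hysmem
  have hfys' : 2 * ys ^ 3 - ys ^ 2 - d / 2 = 0 := hfys
  have huniq : ∀ y : ℝ, 2 * y ^ 3 - y ^ 2 - d / 2 = 0 → y = ys := by
    intro y hy
    have hsub : (y - ys) * (2 * (y ^ 2 + y * ys + ys ^ 2) - (y + ys)) = 0 := by
      nlinarith [hy, hfys']
    have hQ : 0 < 2 * (y ^ 2 + y * ys + ys ^ 2) - (y + ys) := by
      nlinarith [sq_nonneg (4 * y + 2 * ys - 1)]
    rcases mul_eq_zero.1 hsub with h | h
    · linarith [sub_eq_zero.1 h]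
    · linarith
  refine ⟨ys, fun y => ⟨huniq y, fun h => h ▸ hfys'⟩, ⟨hys1, hys2⟩, by nlinarith, ?_⟩
  intro y hy htan
  by_contra hcon
  push_neg at hcon
  have hy145 : y < 1.45 := lt_of_le_of_lt hcon hys2
  have hylt : y < π / 2 := by nlinarith
  have hsin : 0 < Real.sin y := Real.sin_pos_of_pos_of_lt_pi hy (by nlinarith)
  have hcos : 0 < Real.cos y := Real.cos_pos_of_mem_Ioo ⟨by linarith, hylt⟩
  have htanpos : 0 < Real.tan y := Real.tan_pos_of_pos_of_lt_pi_div_two hy hylt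
  have hsinlt : Real.sin y < y := Real.sin_lt hy
  have hNneg : y ^ 2 - d * y - d / 2 < 0 := by nlinarith
  by_cases hD0 : 2 * y ^ 3 - y ^ 2 - d / 2 = 0
  · rw [hD0] at htan
    simp at htan
    linarith [htan ▸ htanpos]
  · have hyne : y ≠ ys := fun h => hD0 (by rw [h]; exact hfys')
    have hylys : y < ys := lt_of_le_of_ne hcon hyne
    have hDneg : 2 * y ^ 3 - y ^ 2 - d / 2 < 0 := by
      have hQ : 0 < 2 * (y ^ 2 + y * ys + ys ^ 2) - (y + ys) := by
        nlinarith [sq_nonneg (4 * y + 2 * ys - 1)]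
      nlinarith [mul_pos (sub_pos.2 hylys) hQ]
    have hEq : Real.sin y * (2 * y ^ 3 - y ^ 2 - d / 2)
        = (y ^ 2 - d * y - d / 2) * Real.cos y := by
      have h1 : Real.tan y = Real.sin y / Real.cos y := Real.tan_eq_sin_div_cos y
      rw [h1, div_eq_div_iff hcos.ne' hD0] at htan
      exact htan
    have hkey : y * (-(2 * y ^ 3 - y ^ 2 - d / 2))
        < (-(y ^ 2 - d * y - d / 2)) * Real.cos y := by
      by_cases hy6 : y ≤ 0.6
      · have hcb : 1 - y ^ 2 / 2 < Real.cos y :=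
          Real.one_sub_sq_div_two_lt_cos (ne_of_gt hy)
        have hpoly : y * (-(2 * y ^ 3 - y ^ 2 - d / 2))
            < (-(y ^ 2 - d * y - d / 2)) * (1 - y ^ 2 / 2) := by
          nlinarith [mul_pos hy hy, sq_nonneg y]
        calc y * (-(2 * y ^ 3 - y ^ 2 - d / 2))
            < (-(y ^ 2 - d * y - d / 2)) * (1 - y ^ 2 / 2) := hpoly
          _ ≤ (-(y ^ 2 - d * y - d / 2)) * Real.cos y :=
              mul_le_mul_of_nonneg_left (le_of_lt hcb) (by linarith)
      · push_neg at hy6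
        have ht0 : 0 < π / 2 - y := by linarith
        have ht1 : π / 2 - y ≤ 1 := by nlinarith
        have hsint : (π / 2 - y) - (π / 2 - y) ^ 3 / 4 < Real.sin (π / 2 - y) :=
          by have := Real.sin_gt_sub_cube ht0; nlinarith [pow_pos ht0 3]
        have hcys : Real.sin (π / 2 - y) = Real.cos y := Real.sin_pi_div_two_sub y
        have hlb : 3 / 4 * (π / 2 - y) < Real.cos y := by
          rw [← hcys]
          nlinarith [mul_pos ht0 (mul_pos ht0 ht0), sq_nonneg (π / 2 - y),
            mul_pos ht0 ht0]
        have hpilb : (3:ℝ) * 3.141592 / 8 - 3 / 4 * y ≤ 3 / 4 * (π / 2 - y) := by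
          nlinarith
        have hpoly : y * (-(2 * y ^ 3 - y ^ 2 - d / 2))
            < (-(y ^ 2 - d * y - d / 2)) * ((3:ℝ) * 3.141592 / 8 - 3 / 4 * y) := by
          nlinarith [mul_pos hy hy, sq_nonneg (y - 1), sq_nonneg (y - 1.4),
            mul_nonneg (sub_nonneg.2 hy6.le) (sub_nonneg.2 hy145.le),
            mul_pos (mul_pos hy hy) hy,
            mul_nonneg (mul_nonneg (sub_nonneg.2 hy6.le) (sub_nonneg.2 hy145.le)) hy.le]
        calc y * (-(2 * y ^ 3 - y ^ 2 - d / 2))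
            < (-(y ^ 2 - d * y - d / 2)) * ((3:ℝ) * 3.141592 / 8 - 3 / 4 * y) := hpoly
          _ ≤ (-(y ^ 2 - d * y - d / 2)) * (3 / 4 * (π / 2 - y)) :=
              mul_le_mul_of_nonneg_left hpilb (by linarith)
          _ ≤ (-(y ^ 2 - d * y - d / 2)) * Real.cos y :=
              mul_le_mul_of_nonneg_left (le_of_lt hlb) (by linarith)
    have h2 : Real.sin y * (-(2 * y ^ 3 - y ^ 2 - d / 2))
        < y * (-(2 * y ^ 3 - y ^ 2 - d / 2)) :=
      mul_lt_mul_of_pos_right hsinlt (by linarith)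
    nlinarith [hEq, hkey, h2]

/-- With `d = 9π³/(8π + 32/3)`, the cubic `2y³ - y² - d/2` has a
unique real root `y_s`, which lies in `(1.43, 1.45)` (in particular `y_s < π/2`),
and every `y > 0` with `tan y = T(y) = (y² - dy - d/2)/(2y³ - y² - d/2)`
satisfies `y > y_s`. -/
theorem stmt16 :
    ∃ ys : ℝ,
      (∀ y : ℝ, 2 * y ^ 3 - y ^ 2 - (9 * π ^ 3 / (8 * π + 32 / 3)) / 2 = 0 ↔ y = ys) ∧
      ys ∈ Set.Ioo (1.43 : ℝ) (1.45 : ℝ) ∧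
      ys < π / 2 ∧
      ∀ y : ℝ, 0 < y →
        Real.tan y =
          (y ^ 2 - (9 * π ^ 3 / (8 * π + 32 / 3)) * y - (9 * π ^ 3 / (8 * π + 32 / 3)) / 2) /
            (2 * y ^ 3 - y ^ 2 - (9 * π ^ 3 / (8 * π + 32 / 3)) / 2) →
        ys < y :=
  stmt16_aux _ d_bounds.1 d_bounds.2
end
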